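/- arXiv:2103.13773 — 2 statements merged into one kernel-verified Lean document; each statement's English description precedes it below -/
import Mathlib

section
/- Let Â ∈ S_d^{++}(ℝ) and C ∈ S_d^{+}(ℝ). For each t ∈ [0,T], the matrix ξ(t) = −(Â⁻¹/2)(I − e^{−2Â(T−t)}) − e^{−Â(T−t)}(C + Â)⁻¹ e^{−Â(T−t)} is negative definite, and in particular invertible. -/
open Matrix NormedSpace

/-!
Write `s = T - t ≥ 0`. Then `-ξ(t) = ½ Â⁻¹(I - e^{-2sÂ}) + E (C + Â)⁻¹ E` with `E = e^{-sÂ}`.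
The first summand is `f(Â)` for `f(x) = ½ x⁻¹ (1 - e^{-2sx})`, which is nonnegative on the
(positive) spectrum of `Â`, so it is positive semidefinite by the functional calculus. The second
is a congruence of the positive definite `(C + Â)⁻¹` by the invertible symmetric matrix `E`, hence
positive definite, and so is the sum.
-/

namespace Matrix

section

open scoped MatrixOrder Matrix.Norms.L2Operator

variable {n : Type*} [Fintype n] [DecidableEq n]

lemma IsHermitian.exp_smul_eq_cfc {A : Matrix n n ℝ} (hA : A.IsHermitian) (c : ℝ) :
    NormedSpace.exp (c • A) = cfc (fun x => Real.exp (c * x)) A := by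
  rw [← CFC.real_exp_eq_normedSpace_exp (.smul (.all c) hA.isSelfAdjoint),
    ← cfc_comp_smul c Real.exp A Real.continuous_exp.continuousOn hA.isSelfAdjoint]
  rfl

lemma PosDef.inv_eq_cfc {A : Matrix n n ℝ} (hA : A.PosDef) : A⁻¹ = cfc (·⁻¹ : ℝ → ℝ) A :=
  calc A⁻¹ = Ring.inverse (cfc id A) := by
        rw [cfc_id ℝ A hA.isHermitian.isSelfAdjoint, nonsing_inv_eq_ringInverse]
    _ = cfc (fun x => (id x)⁻¹) A :=
        (cfc_inv id A fun _ hx => (hA.isStrictlyPositive.spectrum_pos hx).ne').symm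

lemma PosDef.posSemidef_inv_mul_one_sub_exp {A : Matrix n n ℝ} (hA : A.PosDef) {s : ℝ}
    (hs : 0 ≤ s) : (A⁻¹ * (1 - exp ((-s) • A))).PosSemidef := by
  rw [hA.inv_eq_cfc, hA.isHermitian.exp_smul_eq_cfc, ← cfc_one ℝ A, ← cfc_sub _ _ A,
    ← cfc_mul _ _ A (finite_real_spectrum.continuousOn _), ← nonneg_iff_posSemidef]
  refine cfc_nonneg fun x hx => ?_
  have hx : 0 < x := hA.isStrictlyPositive.spectrum_pos hx
  have : Real.exp (-s * x) ≤ 1 := Real.exp_le_one_iff.mpr (by nlinarith)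
  exact mul_nonneg (inv_nonneg.mpr hx.le) (sub_nonneg.mpr this)

end

end Matrix

theorem xi_negative_definite_general (d : ℕ) (T : ℝ)
    (Ahat C : Matrix (Fin d) (Fin d) ℝ) (hA : Ahat.PosDef) (hC : C.PosSemidef) :
    ∀ t ∈ Set.Icc (0 : ℝ) T,
      (-(-((1 / 2 : ℝ) • Ahat⁻¹ * (1 - exp ((-(2 * (T - t))) • Ahat)))
          - exp ((-(T - t)) • Ahat) * (C + Ahat)⁻¹ * exp ((-(T - t)) • Ahat))).PosDef ∧
      IsUnit (-((1 / 2 : ℝ) • Ahat⁻¹ * (1 - exp ((-(2 * (T - t))) • Ahat)))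
          - exp ((-(T - t)) • Ahat) * (C + Ahat)⁻¹ * exp ((-(T - t)) • Ahat)) := by
  intro t ht
  set s := T - t
  set E := exp ((-s) • Ahat)
  have hs : 0 ≤ s := sub_nonneg.mpr ht.2
  have hP : ((1 / 2 : ℝ) • Ahat⁻¹ * (1 - exp ((-(2 * s)) • Ahat))).PosSemidef := by
    rw [smul_mul_assoc]
    exact (hA.posSemidef_inv_mul_one_sub_exp (by positivity)).smul (by norm_num)
  have hE : Eᴴ = E := (hA.isHermitian.smul (.all (-s))).exp
  have hQ : (E * (C + Ahat)⁻¹ * E).PosDef := by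
    have hEu : IsUnit E := isUnit_exp _
    have := (PosDef.posSemidef_add hC hA).inv.conjTranspose_mul_mul_same
      (mulVec_injective_of_isUnit hEu)
    rwa [hE] at this
  have hPQ := PosDef.posSemidef_add hP hQ
  rw [← neg_add']
  exact ⟨by rwa [neg_neg], hPQ.isUnit.neg⟩

/-- For `Ahat` symmetric positive definite and `C` positive semi-definite, the matrix
`ξ(t) = −(Ahat⁻¹/2)(I − e^{−2Ahat(T−t)}) − e^{−Ahat(T−t)}(C+Ahat)⁻¹e^{−Ahat(T−t)}` is negative
definite (hence invertible) for every `t ∈ [0,T]`. -/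
theorem xi_negative_definite (d : ℕ) (T : ℝ) (hT : 0 ≤ T)
    (Ahat C : Matrix (Fin d) (Fin d) ℝ) (hA : Ahat.PosDef) (hC : C.PosSemidef) :
    ∀ t ∈ Set.Icc (0 : ℝ) T,
      (-(-((1 / 2 : ℝ) • Ahat⁻¹ * (1 - exp ((-(2 * (T - t))) • Ahat)))
          - exp ((-(T - t)) • Ahat) * (C + Ahat)⁻¹ * exp ((-(T - t)) • Ahat))).PosDef ∧
      IsUnit (-((1 / 2 : ℝ) • Ahat⁻¹ * (1 - exp ((-(2 * (T - t))) • Ahat)))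
          - exp ((-(T - t)) • Ahat) * (C + Ahat)⁻¹ * exp ((-(T - t)) • Ahat)) :=
  xi_negative_definite_general d T Ahat C hA hC
end

section
/- Let Â ∈ S_d^{++}(ℝ) and C ∈ S_d^{+}(ℝ). Then the matrix-valued function a(t) = Â − ((Â⁻¹/2)(I − e^{−2Â(T−t)}) + e^{−Â(T−t)}(C+Â)⁻¹e^{−Â(T−t)})⁻¹ is the unique solution on [0,T] of the matrix Riccati terminal value problem a'(t) = Â² − a(t)², a(T) = −C. -/
/-!
Writing `a = Â - B⁻¹`, the Riccati equation `a' = Â² - a²` becomes the linear Lyapunov equation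
`B' = ÂB + BÂ - 1`, and the explicit `B` with `B(T) = (C + Â)⁻¹` solves it. For `t ≤ T`, `B(t)` is
`f(Â)` with `f(x) = (1 - e^{-2(T-t)x}) / (2x) ≥ 0` plus a congruence of the positive definite
`(C + Â)⁻¹`, hence positive definite and invertible. Uniqueness holds because `x ↦ Â² - x²` is
Lipschitz on bounded sets and solutions on the compact interval `[0, T]` are bounded.
-/

open Matrix NormedSpace

/-- The explicit solution `a(t) = Ahat − ((Ahat⁻¹/2)(I − e^{−2Ahat(T−t)}) +
e^{−Ahat(T−t)}(C+Ahat)⁻¹e^{−Ahat(T−t)})⁻¹` of the matrix Riccati terminal value problem. -/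
noncomputable def riccatiSol (d : ℕ) (T : ℝ) (Ahat C : Matrix (Fin d) (Fin d) ℝ) (t : ℝ) :
    Matrix (Fin d) (Fin d) ℝ :=
  Ahat - ((1 / 2 : ℝ) • Ahat⁻¹ * (1 - exp ((-(2 * (T - t))) • Ahat))
    + exp ((-(T - t)) • Ahat) * (C + Ahat)⁻¹ * exp ((-(T - t)) • Ahat))⁻¹

open Set Metric NNReal
open scoped Ring

section NormedRing

variable {R : Type*} [NormedRing R]

theorem lipschitzOnWith_const_sub_sq (c : R) (r : ℝ≥0) :
    LipschitzOnWith (2 * r) (fun x : R => c - x ^ 2) (closedBall 0 r) := by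
  refine LipschitzOnWith.of_dist_le_mul fun x hx y hy => ?_
  rw [mem_closedBall_zero_iff] at hx hy
  have hdiff : c - x ^ 2 - (c - y ^ 2) = y * (y - x) + (y - x) * x := by noncomm_ring
  rw [dist_eq_norm, dist_eq_norm', hdiff, NNReal.coe_mul, NNReal.coe_two]
  calc ‖y * (y - x) + (y - x) * x‖ ≤ ‖y‖ * ‖y - x‖ + ‖y - x‖ * ‖x‖ :=
        (norm_add_le _ _).trans (add_le_add (norm_mul_le _ _) (norm_mul_le _ _))
    _ ≤ r * ‖y - x‖ + ‖y - x‖ * r := by gcongr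
    _ = 2 * r * ‖y - x‖ := by ring

variable [NormedAlgebra ℝ R]

theorem eqOn_Icc_of_hasDerivAt_const_sub_sq {c : R} {f g : ℝ → R} {a b : ℝ}
    (hf : ∀ t ∈ Icc a b, HasDerivAt f (c - f t ^ 2) t)
    (hg : ∀ t ∈ Icc a b, HasDerivAt g (c - g t ^ 2) t) (hfg : f b = g b) :
    EqOn f g (Icc a b) := by
  have hfc : ContinuousOn f (Icc a b) := fun t ht => (hf t ht).continuousAt.continuousWithinAt
  have hgc : ContinuousOn g (Icc a b) := fun t ht => (hg t ht).continuousAt.continuousWithinAt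
  obtain ⟨rf, hrf⟩ := isCompact_Icc.exists_bound_of_continuousOn hfc
  obtain ⟨rg, hrg⟩ := isCompact_Icc.exists_bound_of_continuousOn hgc
  set r : ℝ≥0 := ⟨max (max rf rg) 0, le_max_right _ _⟩
  have hfr : ∀ t ∈ Ioc a b, f t ∈ closedBall 0 r := fun t ht =>
    mem_closedBall_zero_iff.2 <| (hrf t (Ioc_subset_Icc_self ht)).trans <|
      (le_max_left _ _).trans (le_max_left _ _)
  have hgr : ∀ t ∈ Ioc a b, g t ∈ closedBall 0 r := fun t ht =>
    mem_closedBall_zero_iff.2 <| (hrg t (Ioc_subset_Icc_self ht)).trans <|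
      (le_max_right _ _).trans (le_max_left _ _)
  exact ODE_solution_unique_of_mem_Icc_left (v := fun _ x => c - x ^ 2)
    (fun _ _ => lipschitzOnWith_const_sub_sq c r)
    hfc (fun t ht => (hf t (Ioc_subset_Icc_self ht)).hasDerivWithinAt) hfr
    hgc (fun t ht => (hg t (Ioc_subset_Icc_self ht)).hasDerivWithinAt) hgr hfg

variable [CompleteSpace R]

theorem HasDerivAt.ringInverse {B : ℝ → R} {B' : R} {t : ℝ} (hB : HasDerivAt B B' t)
    (hu : IsUnit (B t)) :
    HasDerivAt (fun s => (B s)⁻¹ʳ) (-((B t)⁻¹ʳ * B' * (B t)⁻¹ʳ)) t := by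
  obtain ⟨u, hu⟩ := hu
  have h := hasFDerivAt_ringInverse (𝕜 := ℝ) u
  rw [← Ring.inverse_unit, hu] at h
  exact (h.comp_hasDerivAt t hB).congr_deriv (by simp [mul_assoc])

theorem HasDerivAt.sub_ringInverse_of_lyapunov {A : R} {B : ℝ → R} {t : ℝ}
    (hB : HasDerivAt B (A * B t + B t * A - 1) t) (hu : IsUnit (B t)) :
    HasDerivAt (fun s => A - (B s)⁻¹ʳ) (A ^ 2 - (A - (B t)⁻¹ʳ) ^ 2) t := by
  refine ((hB.ringInverse hu).const_sub A).congr_deriv ?_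
  have hl : (B t)⁻¹ʳ * B t = 1 := Ring.inverse_mul_cancel _ hu
  have hr : B t * (B t)⁻¹ʳ = 1 := Ring.mul_inverse_cancel _ hu
  calc -(-((B t)⁻¹ʳ * (A * B t + B t * A - 1) * (B t)⁻¹ʳ))
      = (B t)⁻¹ʳ * (A * B t) * (B t)⁻¹ʳ + (B t)⁻¹ʳ * (B t * A) * (B t)⁻¹ʳ
        - (B t)⁻¹ʳ * (B t)⁻¹ʳ := by noncomm_ring
    _ = A ^ 2 - (A - (B t)⁻¹ʳ) ^ 2 := by
        simp only [← mul_assoc, hl, one_mul]; simp only [mul_assoc, hr, mul_one]; noncomm_ring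

theorem HasDerivAt.exp_smul_const {φ : ℝ → ℝ} {φ' t : ℝ} (hφ : HasDerivAt φ φ' t) (A : R) :
    HasDerivAt (fun s => NormedSpace.exp (φ s • A)) (φ' • (A * NormedSpace.exp (φ t • A))) t :=
  (hasDerivAt_exp_smul_const' A (φ t)).scomp t hφ

noncomputable def lyapunovSol (A P M : R) (T t : ℝ) : R :=
  (1 / 2 : ℝ) • P * (1 - exp ((-(2 * (T - t))) • A))
    + exp ((-(T - t)) • A) * M * exp ((-(T - t)) • A)

theorem hasDerivAt_lyapunovSol {A P : R} (hAP : A * P = 1) (hPA : P * A = 1) (M : R) (T t : ℝ) :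
    HasDerivAt (lyapunovSol A P M T)
      (A * lyapunovSol A P M T t + lyapunovSol A P M T t * A - 1) t := by
  set E₁ := exp ((-(T - t)) • A)
  set E₂ := exp ((-(2 * (T - t))) • A)
  have h₁ : HasDerivAt (fun s => exp ((-(T - s)) • A)) ((1 : ℝ) • (A * E₁)) t :=
    HasDerivAt.exp_smul_const (((hasDerivAt_id t).const_sub T).fun_neg.congr_deriv (by simp)) A
  have h₂ : HasDerivAt (fun s => exp ((-(2 * (T - s))) • A)) ((2 : ℝ) • (A * E₂)) t :=
    HasDerivAt.exp_smul_const
      ((((hasDerivAt_id t).const_sub T).const_mul 2).fun_neg.congr_deriv (by simp)) A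
  refine (((h₂.const_sub 1).const_mul ((1 / 2 : ℝ) • P)).add
    ((h₁.mul_const M).mul h₁)).congr_deriv ?_
  have c₁ : E₁ * A = A * E₁ := (((Commute.refl A).smul_right _).exp_right).eq.symm
  have c₂ : E₂ * A = A * E₂ := (((Commute.refl A).smul_right _).exp_right).eq.symm
  have e₁ : A * ((1 / 2 : ℝ) • P * (1 - E₂)) = (1 / 2 : ℝ) • (1 - E₂) := by
    rw [smul_mul_assoc, mul_smul_comm, ← mul_assoc, hAP, one_mul]
  have e₂ : (1 / 2 : ℝ) • P * (1 - E₂) * A = (1 / 2 : ℝ) • (1 - E₂) := by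
    rw [smul_mul_assoc, smul_mul_assoc, mul_assoc, sub_mul, c₂, one_mul, mul_sub, ← mul_assoc,
      hPA, one_mul]
  have e₃ : (1 / 2 : ℝ) • P * -((2 : ℝ) • (A * E₂)) = -E₂ := by
    rw [mul_neg, smul_mul_smul_comm, ← mul_assoc, hPA, one_mul]; norm_num
  have e₄ : E₁ * M * (A * E₁) = E₁ * M * E₁ * A := by rw [← c₁, mul_assoc (E₁ * M)]
  show (1 / 2 : ℝ) • P * -((2 : ℝ) • (A * E₂))
        + ((1 : ℝ) • (A * E₁) * M * E₁ + E₁ * M * ((1 : ℝ) • (A * E₁)))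
      = A * ((1 / 2 : ℝ) • P * (1 - E₂) + E₁ * M * E₁)
        + ((1 / 2 : ℝ) • P * (1 - E₂) + E₁ * M * E₁) * A - 1
  rw [mul_add, add_mul, e₁, e₂, e₃, one_smul, e₄]
  simp only [mul_assoc]
  module

end NormedRing

section Matrix

open scoped Matrix.Norms.L2Operator MatrixOrder

variable {n : Type*} [Fintype n] [DecidableEq n]

theorem hasDerivAt_matrix_iff {f : ℝ → Matrix n n ℝ} {f' : Matrix n n ℝ} {t : ℝ} :
    HasDerivAt f f' t ↔ ∀ i j, HasDerivAt (fun s => f s i j) (f' i j) t := by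
  simp only [hasDerivAt_iff_tendsto_slope]
  exact tendsto_pi_nhds.trans (forall_congr' fun i => tendsto_pi_nhds)

theorem posSemidef_inv_mul_one_sub_exp {A : Matrix n n ℝ} (hA : A.IsHermitian) (hu : IsUnit A)
    {s : ℝ} (hs : 0 ≤ s) : (A⁻¹ * (1 - exp ((-s) • A))).PosSemidef := by
  have hsa : IsSelfAdjoint A := hA
  have hinv : ContinuousOn (fun x : ℝ => x⁻¹) (spectrum ℝ A) :=
    continuousOn_inv₀.mono fun x hx => by rintro rfl; exact spectrum.zero_notMem ℝ hu hx
  have hexp : exp ((-s) • A) = cfc (fun x => Real.exp (-s * x)) A := by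
    rw [← CFC.real_exp_eq_normedSpace_exp ((IsSelfAdjoint.all _).smul hsa),
      ← cfc_comp_smul (-s) Real.exp A]
    rfl
  have hcfc : cfc (fun x => x⁻¹ * (1 - Real.exp (-s * x))) A = A⁻¹ * (1 - exp ((-s) • A)) := by
    rw [cfc_mul _ _ A hinv, cfc_sub _ _ A, cfc_const_one ℝ A, ← hexp, cfc_ringInverse_id A hu,
      nonsing_inv_eq_ringInverse]
  rw [← hcfc, ← Matrix.nonneg_iff_posSemidef]
  refine cfc_nonneg fun x _ => ?_
  rcases le_total 0 x with hx | hx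
  · exact mul_nonneg (inv_nonneg.2 hx) (sub_nonneg.2 (Real.exp_le_one_iff.2 (by nlinarith)))
  · exact mul_nonneg_of_nonpos_of_nonpos (inv_nonpos.2 hx)
      (sub_nonpos.2 (Real.one_le_exp_iff.2 (by nlinarith)))

theorem Matrix.PosDef.exp_smul_mul_mul_exp_smul {A M : Matrix n n ℝ} (hA : A.IsHermitian)
    (hM : M.PosDef) (c : ℝ) : (exp (c • A) * M * exp (c • A)).PosDef := by
  have hE : (exp (c • A))ᴴ = exp (c • A) := ((IsSelfAdjoint.all c).smul hA.isSelfAdjoint).exp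
  have h := hM.conjTranspose_mul_mul_same
    (mulVec_injective_iff_isUnit.2 (Matrix.isUnit_exp (c • A)))
  rwa [hE] at h

theorem posDef_lyapunovSol {A C : Matrix n n ℝ} (hA : A.PosDef) (hC : C.PosSemidef) {T t : ℝ}
    (ht : t ≤ T) : (lyapunovSol A A⁻¹ (C + A)⁻¹ T t).PosDef := by
  have h₁ := (posSemidef_inv_mul_one_sub_exp hA.isHermitian hA.isUnit
    (s := 2 * (T - t)) (by linarith)).smul (a := (1 / 2 : ℝ)) (by norm_num)
  rw [← smul_mul_assoc] at h₁
  exact PosDef.posSemidef_add h₁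
    ((PosDef.posSemidef_add hC hA).inv.exp_smul_mul_mul_exp_smul hA.isHermitian _)

theorem riccatiSol_eq_sub_ringInverse {d : ℕ} (T : ℝ) (Ahat C : Matrix (Fin d) (Fin d) ℝ) :
    riccatiSol d T Ahat C = fun t => Ahat - (lyapunovSol Ahat Ahat⁻¹ (C + Ahat)⁻¹ T t)⁻¹ʳ := by
  funext t
  exact congrArg (Ahat - ·) (nonsing_inv_eq_ringInverse _)

theorem hasDerivAt_riccatiSol {d : ℕ} {T t : ℝ} {Ahat C : Matrix (Fin d) (Fin d) ℝ}
    (hA : Ahat.PosDef) (hC : C.PosSemidef) (ht : t ≤ T) :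
    HasDerivAt (riccatiSol d T Ahat C) (Ahat ^ 2 - riccatiSol d T Ahat C t ^ 2) t := by
  have hdet := (isUnit_iff_isUnit_det Ahat).1 hA.isUnit
  rw [riccatiSol_eq_sub_ringInverse]
  exact (hasDerivAt_lyapunovSol (mul_nonsing_inv _ hdet) (nonsing_inv_mul _ hdet) _ T t
    ).sub_ringInverse_of_lyapunov (posDef_lyapunovSol hA hC ht).isUnit

end Matrix

theorem riccatiSol_self {d : ℕ} {T : ℝ} {Ahat C : Matrix (Fin d) (Fin d) ℝ} (hA : Ahat.PosDef)
    (hC : C.PosSemidef) : riccatiSol d T Ahat C T = -C := by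
  have hdet := (isUnit_iff_isUnit_det _).1 (PosDef.posSemidef_add hC hA).isUnit
  simp [riccatiSol, nonsing_inv_nonsing_inv _ hdet]

theorem riccati_explicit_unique_general (d : ℕ) (T : ℝ)
    (Ahat C : Matrix (Fin d) (Fin d) ℝ) (hA : Ahat.PosDef) (hC : C.PosSemidef) :
    ((∀ t ∈ Set.Icc (0 : ℝ) T, ∀ i j : Fin d,
        HasDerivAt (fun s => riccatiSol d T Ahat C s i j)
          ((Ahat ^ 2 - riccatiSol d T Ahat C t ^ 2) i j) t) ∧
      riccatiSol d T Ahat C T = -C) ∧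
    ∀ b : ℝ → Matrix (Fin d) (Fin d) ℝ,
      (∀ t ∈ Set.Icc (0 : ℝ) T, ∀ i j : Fin d,
        HasDerivAt (fun s => b s i j) ((Ahat ^ 2 - b t ^ 2) i j) t) →
      b T = -C →
      ∀ t ∈ Set.Icc (0 : ℝ) T, b t = riccatiSol d T Ahat C t := by
  open scoped Matrix.Norms.L2Operator in
  have hderiv : ∀ t ∈ Icc 0 T,
      HasDerivAt (riccatiSol d T Ahat C) (Ahat ^ 2 - riccatiSol d T Ahat C t ^ 2) t :=
    fun t ht => hasDerivAt_riccatiSol hA hC ht.2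
  refine ⟨⟨fun t ht => hasDerivAt_matrix_iff.1 (hderiv t ht), riccatiSol_self hA hC⟩, ?_⟩
  intro b hb hbT
  open scoped Matrix.Norms.L2Operator in
  exact eqOn_Icc_of_hasDerivAt_const_sub_sq (fun t ht => hasDerivAt_matrix_iff.2 (hb t ht)) hderiv
    (hbT.trans (riccatiSol_self hA hC).symm)

/-- `riccatiSol` is the unique solution on `[0,T]` of `a'(t) = Ahat² − a(t)²`, `a(T) = −C`. -/
theorem riccati_explicit_unique (d : ℕ) (T : ℝ) (hT : 0 ≤ T)
    (Ahat C : Matrix (Fin d) (Fin d) ℝ) (hA : Ahat.PosDef) (hC : C.PosSemidef) :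
    ((∀ t ∈ Set.Icc (0 : ℝ) T, ∀ i j : Fin d,
        HasDerivAt (fun s => riccatiSol d T Ahat C s i j)
          ((Ahat ^ 2 - riccatiSol d T Ahat C t ^ 2) i j) t) ∧
      riccatiSol d T Ahat C T = -C) ∧
    ∀ b : ℝ → Matrix (Fin d) (Fin d) ℝ,
      (∀ t ∈ Set.Icc (0 : ℝ) T, ∀ i j : Fin d,
        HasDerivAt (fun s => b s i j) ((Ahat ^ 2 - b t ^ 2) i j) t) →
      b T = -C →
      ∀ t ∈ Set.Icc (0 : ℝ) T, b t = riccatiSol d T Ahat C t :=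
  riccati_explicit_unique_general d T Ahat C hA hC
end
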